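/- Let d ≥ 2 be an even integer and let P : ℝ[X] satisfy: natDegree P = 2d, P.coeff k = 0 for every odd k, P.coeff 0 ≠ 0, Multiset.card P.roots = 2d, and exactly d roots of P (with multiplicity) lie in (0, ∞). Let ε ∈ ℝ and set Q = P - ε • X^d; assume also Multiset.card Q.roots = 2d and exactly d roots of Q (with multiplicity) lie in (0, ∞). Then the product of the roots of P in (0, ∞) equals the product of the roots of Q in (0, ∞). (This is the even-degree case of the key lemma for Arnold's theorem on ℍ¹ and 𝕊¹: in arc-length coordinates t = log x on the hyperbola branch, ∑ (t_i - t_i^ε) = 0.) -/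

import Mathlib

/-!
An even polynomial with nonzero constant term has its roots symmetric about `0` and none at `0`,
so if it splits, Vieta's formula reads `p(0) = (-1)^m · lc(p) · (∏ positive roots)²`, where `m`,
the number of positive roots, is half the degree. For `d` even with `0 < d < deg P`, the
polynomial `P - ε X^d` is again even, with the same degree, leading coefficient and constant term,
and a product of positive numbers is determined by its square.
-/

open Polynomial

namespace Polynomial

theorem comp_neg_X_eq_self_of_coeff_odd {R : Type*} [CommRing R] {p : R[X]}
    (hodd : ∀ k, Odd k → p.coeff k = 0) : p.comp (-X) = p := by
  conv_rhs => rw [← p.sum_C_mul_X_pow_eq]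
  rw [comp_eq_sum_left]
  refine Finset.sum_congr rfl fun k hk => ?_
  have hk : Even k := Nat.not_odd_iff_even.1 fun h => mem_support_iff.1 hk (hodd k h)
  simp only [hk.neg_pow]

section Ordered

variable {R : Type*} [CommRing R] [LinearOrder R] [IsStrictOrderedRing R] {p : R[X]}

theorem roots_eq_filter_pos_add_map_neg (hp : p.comp (-X) = p) (h0 : p.coeff 0 ≠ 0) :
    p.roots = p.roots.filter (0 < ·) + (p.roots.filter (0 < ·)).map Neg.neg := by
  have hneg : p.roots.map Neg.neg = p.roots := by rw [← roots_comp_neg_X, hp]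
  have hnonpos : p.roots.filter (¬ 0 < ·) = (p.roots.filter (0 < ·)).map Neg.neg := by
    conv_lhs => rw [← hneg]
    rw [Multiset.filter_map]
    refine congrArg _ (Multiset.filter_congr fun x hx => ?_)
    have hx0 : x ≠ 0 := by
      rintro rfl
      exact h0 (by simpa [coeff_zero_eq_eval_zero] using isRoot_of_mem_roots hx)
    simp only [Function.comp_apply, not_lt, neg_nonpos]
    exact ⟨fun h => h.lt_of_ne' hx0, le_of_lt⟩
  rw [← hnonpos, Multiset.filter_add_not]

theorem card_roots_eq_two_mul_card_filter_pos (hp : p.comp (-X) = p) (h0 : p.coeff 0 ≠ 0) :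
    p.roots.card = 2 * (p.roots.filter (0 < ·)).card := by
  conv_lhs => rw [roots_eq_filter_pos_add_map_neg hp h0]
  rw [Multiset.card_add, Multiset.card_map, two_mul]

theorem prod_roots_eq_neg_one_pow_mul_sq (hp : p.comp (-X) = p) (h0 : p.coeff 0 ≠ 0) :
    p.roots.prod = (-1) ^ (p.roots.filter (0 < ·)).card * (p.roots.filter (0 < ·)).prod ^ 2 := by
  conv_lhs => rw [roots_eq_filter_pos_add_map_neg hp h0]
  rw [Multiset.prod_add, Multiset.prod_map_neg]
  ring

theorem Splits.coeff_zero_eq_neg_one_pow_mul_sq (hp : p.comp (-X) = p) (hs : p.Splits)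
    (h0 : p.coeff 0 ≠ 0) :
    p.coeff 0 = (-1) ^ (p.roots.filter (0 < ·)).card * p.leadingCoeff *
      (p.roots.filter (0 < ·)).prod ^ 2 := by
  have hdeg := card_roots_eq_two_mul_card_filter_pos hp h0
  rw [← hs.natDegree_eq_card_roots] at hdeg
  rw [hs.coeff_zero_eq_leadingCoeff_mul_prod_roots, hdeg, pow_mul, neg_one_sq, one_pow,
    prod_roots_eq_neg_one_pow_mul_sq hp h0]
  ring

theorem prod_filter_pos_roots_eq {q : R[X]} (hp : p.comp (-X) = p) (hq : q.comp (-X) = q)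
    (hps : p.Splits) (hqs : q.Splits) (h0 : p.coeff 0 ≠ 0) (hc : q.coeff 0 = p.coeff 0)
    (hlc : q.leadingCoeff = p.leadingCoeff) (hdeg : q.natDegree = p.natDegree) :
    (p.roots.filter (0 < ·)).prod = (q.roots.filter (0 < ·)).prod := by
  have hq0 : q.coeff 0 ≠ 0 := hc ▸ h0
  have hcard : (p.roots.filter (0 < ·)).card = (q.roots.filter (0 < ·)).card := by
    have := card_roots_eq_two_mul_card_filter_pos hp h0
    have := card_roots_eq_two_mul_card_filter_pos hq hq0
    rw [hps.natDegree_eq_card_roots, hqs.natDegree_eq_card_roots] at hdeg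
    omega
  have hsq := hps.coeff_zero_eq_neg_one_pow_mul_sq hp h0
  rw [← hc, hqs.coeff_zero_eq_neg_one_pow_mul_sq hq hq0, hlc, ← hcard] at hsq
  have hcoeff_ne : (-1 : R) ^ (p.roots.filter (0 < ·)).card * p.leadingCoeff ≠ 0 := by
    have hlc0 : p.leadingCoeff ≠ 0 := fun h => h0 (by simp [leadingCoeff_eq_zero.1 h])
    exact mul_ne_zero (pow_ne_zero _ (neg_ne_zero.2 one_ne_zero)) hlc0
  refine (pow_left_inj₀ ?_ ?_ two_ne_zero).1 (mul_left_cancel₀ hcoeff_ne hsq).symm <;>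
    exact Multiset.prod_nonneg fun x hx => (Multiset.of_mem_filter hx).le

end Ordered

end Polynomial

theorem prod_pos_roots_eq_even_case (d : ℕ) (hd : 2 ≤ d) (hdeven : Even d) (P : ℝ[X])
    (hdeg : P.natDegree = 2 * d) (hodd : ∀ k, Odd k → P.coeff k = 0)
    (h0 : P.coeff 0 ≠ 0) (hroots : Multiset.card P.roots = 2 * d)
    (ε : ℝ)
    (hrootsQ : Multiset.card (P - ε • X ^ d).roots = 2 * d) :
    (P.roots.filter fun x => 0 < x).prod =
      ((P - ε • X ^ d).roots.filter fun x => 0 < x).prod := by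
  have hP : P.comp (-X) = P := comp_neg_X_eq_self_of_coeff_odd hodd
  have hlt : (ε • X ^ d : ℝ[X]).natDegree < P.natDegree :=
    (natDegree_smul_le _ _).trans_lt (by rw [natDegree_X_pow, hdeg]; omega)
  have hQdeg : (P - ε • X ^ d).natDegree = P.natDegree :=
    natDegree_sub_eq_left_of_natDegree_lt hlt
  refine prod_filter_pos_roots_eq hP ?_ (splits_iff_card_roots.2 (hroots.trans hdeg.symm))
    (splits_iff_card_roots.2 (by rw [hQdeg, hdeg, hrootsQ])) h0 ?_
    (leadingCoeff_sub_of_degree_lt (degree_lt_degree hlt)) hQdeg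
  · rw [sub_comp, smul_comp, X_pow_comp, hdeven.neg_pow, hP]
  · simp [coeff_X_pow, show 0 ≠ d by omega]
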